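/- arXiv:math/0512240 — 4 statements merged into one kernel-verified Lean document; each statement's English description precedes it below -/
import Mathlib

section
/- Let E be a finite-dimensional real vector space, C a subset of the dual space E*, and β, α ∈ E*, d > 0 real numbers with β/d ∈ C. Suppose there exists a linear map w : E* → E* with w(C) ⊆ C and w(β) = β − uα for some real number u > 0. Then every a ∈ E satisfying (χ(a) ≤ 1 for all χ ∈ C) and β(a) = d also satisfies α(a) ≥ 0. -/
/-- **Lemma 2.3 (abstract form).** Let `C` be a set of linear forms on a
finite-dimensional real vector space `E`, `β, α` linear forms, `d > 0` with `β/d ∈ C`.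
If some linear map `w` of the dual preserves `C` and sends `β` to `β - u • α` with
`u > 0`, then every `a` in the dual set of `C` with `β a = d` satisfies `α a ≥ 0`. -/
theorem dual_face_nonneg_of_reflection
    {E : Type*} [AddCommGroup E] [Module ℝ E] [FiniteDimensional ℝ E]
    (C : Set (E →ₗ[ℝ] ℝ)) (β α : E →ₗ[ℝ] ℝ) (d : ℝ) (hd : 0 < d)
    (hβd : d⁻¹ • β ∈ C)
    (w : (E →ₗ[ℝ] ℝ) →ₗ[ℝ] (E →ₗ[ℝ] ℝ)) (hwC : w '' C ⊆ C)
    (u : ℝ) (hu : 0 < u) (hwβ : w β = β - u • α) :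
    ∀ a : E, (∀ χ ∈ C, χ a ≤ 1) → β a = d → 0 ≤ α a := by
  intro a ha hβa
  have hmem : w (d⁻¹ • β) ∈ C := hwC ⟨_, hβd, rfl⟩
  have h := ha _ hmem
  simp only [map_smul, hwβ, LinearMap.smul_apply, LinearMap.sub_apply,
    LinearMap.smul_apply, smul_eq_mul, hβa] at h
  have hd' : d⁻¹ * d = 1 := inv_mul_cancel₀ hd.ne'
  nlinarith [mul_pos (inv_pos.mpr hd) hu]
end

section
/- Let C be the convex hull of a finite set in a finite-dimensional real vector space (a convex polytope), and let F be a proper face of C (F ≠ C). Let γ be a point of the relative (intrinsic) interior of F and let γ' ∈ C \ F. Then there exist λ ∈ (0, 1] and a face F' of C, whose dimension is strictly greater than the dimension of F, such that λγ' + (1 − λ)γ lies in the relative (intrinsic) interior of F'. -/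
/-! Take `λ = 1/2`: the midpoint of `γ'` and `γ` lies in the relative interior of some face `F'`.
Every point of a polytope does: if it is on the relative boundary, a supporting hyperplane through
it cuts out a polytope on fewer vertices, and a face of that face is again a face, since its
exposing functional can be tilted by a large multiple of the first one. As `F'` is extreme, it
contains `γ'` and `γ`, hence all of `F`, because `γ` is relatively interior to `F`. If `F'` had
the dimension of `F`, it would lie in the affine span of `F`, whose intersection with `C` is `F`;
but `γ' ∈ F' \ F`. -/

open Module

/-- A face of a convex polytope `C`: either `C` itself, or a nonempty intersection of `C`
with a supporting hyperplane of `C`. -/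
def IsPolytopeFace {E : Type*} [NormedAddCommGroup E] [NormedSpace ℝ E]
    (C F : Set E) : Prop :=
  F = C ∨
    ∃ (l : E →ₗ[ℝ] ℝ) (c : ℝ), l ≠ 0 ∧ (∀ x ∈ C, l x ≤ c) ∧
      F = C ∩ {x | l x = c} ∧ F.Nonempty

theorem exists_add_mul_nonpos_and_eq_zero_iff {ι : Type*} {S : Set ι} (hS : S.Finite)
    {a b : ι → ℝ} (ha : ∀ i ∈ S, a i ≤ 0) (hb : ∀ i ∈ S, a i = 0 → b i ≤ 0) :
    ∃ N : ℝ, ∀ i ∈ S, b i + N * a i ≤ 0 ∧ (b i + N * a i = 0 ↔ a i = 0 ∧ b i = 0) := by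
  obtain ⟨M, hM⟩ := ((hS.inter_of_left {i | a i < 0}).image fun i ↦ b i / -a i).bddAbove
  refine ⟨M + 1, fun i hi ↦ ?_⟩
  rcases (ha i hi).lt_or_eq with hlt | heq
  · have hbM : b i ≤ M * -a i := (div_le_iff₀ (neg_pos.2 hlt)).1 (hM ⟨i, ⟨hi, hlt⟩, rfl⟩)
    have hneg : b i + (M + 1) * a i < 0 := by linarith
    exact ⟨hneg.le, iff_of_false hneg.ne fun h ↦ hlt.ne h.1⟩
  · simp [heq, hb i hi heq]

section Hyperplane

open Set

variable {E : Type*} [NormedAddCommGroup E] [NormedSpace ℝ E]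

theorem forall_mem_convexHull_le {S : Set E} {l : E →ₗ[ℝ] ℝ} {c : ℝ} (hle : ∀ s ∈ S, l s ≤ c) :
    ∀ x ∈ convexHull ℝ S, l x ≤ c :=
  fun _ hx ↦ convexHull_min hle (convex_halfSpace_le l.isLinear c) hx

theorem isExtreme_inter_eq_of_le {C : Set E} {l : E →ₗ[ℝ] ℝ} {c : ℝ} (hle : ∀ x ∈ C, l x ≤ c) :
    IsExtreme ℝ C (C ∩ {x | l x = c}) := by
  refine ⟨inter_subset_left, fun x₁ hx₁ x₂ hx₂ x ⟨_, hx⟩ hseg ↦ ⟨hx₁, ?_⟩⟩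
  rw [mem_ofPred_eq] at hx ⊢
  exact (hle x₁ hx₁).antisymm (hx ▸ (l.convexOn convex_univ).le_left_of_right_le trivial trivial
    hseg (hx ▸ hle x₂ hx₂))

theorem isPolytopeFace_inter_eq_of_le {C : Set E} {l : E →ₗ[ℝ] ℝ} {c : ℝ}
    (hle : ∀ x ∈ C, l x ≤ c) (hne : (C ∩ {x | l x = c}).Nonempty) :
    IsPolytopeFace C (C ∩ {x | l x = c}) := by
  by_cases hl : l = 0
  · obtain ⟨z, -, hz⟩ := hne
    have hc : c = 0 := by simpa [hl, eq_comm] using hz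
    exact .inl (by simp [hl, hc])
  · exact .inr ⟨l, c, hl, hle, rfl, hne⟩

end Hyperplane

namespace IsPolytopeFace

variable {E : Type*} [NormedAddCommGroup E] [NormedSpace ℝ E] {C F : Set E}

theorem isExtreme (h : IsPolytopeFace C F) : IsExtreme ℝ C F := by
  rcases h with rfl | ⟨l, c, -, hle, rfl, -⟩
  · exact .rfl
  · exact isExtreme_inter_eq_of_le hle

theorem inter_affineSpan_subset (h : IsPolytopeFace C F) : C ∩ affineSpan ℝ F ⊆ F := by
  rcases h with rfl | ⟨l, c, -, -, rfl, -⟩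
  · exact Set.inter_subset_left
  · rintro z ⟨hz, hzspan⟩
    exact ⟨hz, AffineMap.eqOn_affineSpan (f := l.toAffineMap) (g := AffineMap.const ℝ E c)
      (fun y hy ↦ hy.2) hzspan⟩

theorem finrank_direction_lt [FiniteDimensional ℝ E] (h : IsPolytopeFace C F) (hne : F.Nonempty)
    {F' : Set E} (hFF' : F ⊆ F') (hF'C : F' ⊆ C) (hF'F : ¬F' ⊆ F) :
    finrank ℝ (affineSpan ℝ F).direction < finrank ℝ (affineSpan ℝ F').direction := by
  have hspan : affineSpan ℝ F ≤ affineSpan ℝ F' := affineSpan_mono ℝ hFF'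
  refine Submodule.finrank_lt_finrank_of_lt
    ((AffineSubspace.direction_le hspan).lt_of_ne fun hdir ↦ hF'F fun z hz ↦ ?_)
  have heq := AffineSubspace.eq_of_direction_eq_of_nonempty_of_le hdir
    ((affineSpan_nonempty ℝ).2 hne) hspan
  exact h.inter_affineSpan_subset ⟨hF'C hz, heq ▸ subset_affineSpan ℝ F' hz⟩

end IsPolytopeFace

section Polytope

open Set

variable {E : Type*} [NormedAddCommGroup E] [NormedSpace ℝ E]

theorem IsExtreme.subset_of_mem_intrinsicInterior {C F F' : Set E} (hF' : IsExtreme ℝ C F')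
    (hFC : F ⊆ C) {x : E} (hx : x ∈ intrinsicInterior ℝ F) (hxF' : x ∈ F') : F ⊆ F' := by
  intro y hy
  obtain ⟨w, hw, rfl⟩ := hx
  let g : ℝ → affineSpan ℝ F := fun t ↦
    ⟨AffineMap.lineMap y (w : E) t, AffineMap.lineMap_mem _ (subset_affineSpan ℝ F hy) w.2⟩
  -- For `t > 1` near `1`, the point `g t` beyond `w` on the ray from `y` is still in `F`,
  -- and `w` lies strictly between `y` and `g t`.
  have hev : ∀ᶠ t in nhdsWithin 1 (Ioi 1), g t ∈ interior ((↑) ⁻¹' F) := by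
    have hg1 : g 1 = w := Subtype.ext (AffineMap.lineMap_apply_one _ _)
    have hg : Continuous g := by fun_prop
    exact nhdsWithin_le_nhds ((hg.tendsto 1).eventually (isOpen_interior.mem_nhds (hg1 ▸ hw)))
  obtain ⟨t, hgt, ht⟩ := (hev.and self_mem_nhdsWithin).exists
  have hz : g t ∈ (↑) ⁻¹' F := interior_subset hgt
  refine hF'.left_mem_of_mem_openSegment (hFC hy) (hFC hz) hxF' ?_
  have ht0 : 0 < t := zero_lt_one.trans ht
  have := lineMap_mem_openSegment ℝ y (g t : E) ⟨inv_pos.2 ht0, inv_lt_one_of_one_lt₀ ht⟩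
  rwa [AffineMap.lineMap_lineMap_right, inv_mul_cancel₀ ht0.ne',
    AffineMap.lineMap_apply_one] at this

variable [FiniteDimensional ℝ E]

theorem Convex.exists_le_of_notMem_intrinsicInterior {C : Set E} (hC : Convex ℝ C) {x : E}
    (hx : x ∈ C) (hxi : x ∉ intrinsicInterior ℝ C) :
    ∃ l : E →ₗ[ℝ] ℝ, (∀ y ∈ C, l y ≤ l x) ∧ ∃ y ∈ C, l y < l x := by
  set A := affineSpan ℝ C
  let x' : A := ⟨x, subset_affineSpan ℝ C hx⟩
  have : Nonempty A := ⟨x'⟩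
  let φ := AffineIsometryEquiv.vaddConst ℝ x'
  -- `D` is `C - x`, seen inside the direction of `A`, where it has nonempty interior.
  let D : Set A.direction := φ ⁻¹' ((↑) ⁻¹' C)
  have hDconv : Convex ℝ D := hC.affine_preimage (A.subtype.comp φ.toAffineEquiv.toAffineMap)
  have hDint : interior D = φ ⁻¹' interior ((↑) ⁻¹' C) :=
    (φ.toHomeomorph.preimage_interior _).symm
  have h0 : (0 : A.direction) ∉ interior D := by
    rw [hDint]
    exact fun h ↦ hxi ⟨_, h, by simp [φ, x']⟩
  have hne : (interior D).Nonempty := by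
    obtain ⟨_, ⟨w, hw, rfl⟩⟩ := (intrinsicInterior_nonempty hC).2 ⟨x, hx⟩
    exact ⟨φ.symm w, by rwa [hDint, mem_preimage, φ.apply_symm_apply]⟩
  obtain ⟨f, hf0, hfD⟩ := geometric_hahn_banach_of_nonempty_interior_point hDconv h0 hne
  obtain ⟨l, hl⟩ := LinearMap.exists_extend (f : A.direction →ₗ[ℝ] ℝ)
  have hlf : ∀ v : A.direction, l v = f v := fun v ↦ congr($hl v)
  have hle : ∀ y ∈ C, l y ≤ l x := by
    intro y hy
    have hv : y -ᵥ x ∈ A.direction := by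
      rw [direction_affineSpan]
      exact vsub_mem_vectorSpan ℝ hy hx
    have := hfD ⟨y -ᵥ x, hv⟩ (by simp [D, φ, x', hy])
    rw [← hlf, ← hlf] at this
    simpa [sub_nonneg] using this
  refine ⟨l, hle, ?_⟩
  by_contra! hconst
  have hker : A.direction ≤ LinearMap.ker l := by
    rw [direction_affineSpan, vectorSpan_def, Submodule.span_le]
    rintro _ ⟨p, hp, q, hq, rfl⟩
    simp [(hle p hp).antisymm (hconst p hp), (hle q hq).antisymm (hconst q hq)]
  exact hf0 (ContinuousLinearMap.ext fun v ↦ by simpa [← hlf] using hker v.2)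

theorem Set.Finite.convexHull_inter_eq_of_le {S : Set E} (hS : S.Finite) {l : E →ₗ[ℝ] ℝ}
    {c : ℝ} (hle : ∀ s ∈ S, l s ≤ c) :
    convexHull ℝ S ∩ {x | l x = c} = convexHull ℝ (S ∩ {x | l x = c}) := by
  set B := convexHull ℝ S ∩ {x | l x = c}
  have hBconv : Convex ℝ B := (convex_convexHull ℝ S).inter (convex_hyperplane l.isLinear c)
  have hBcomp : IsCompact B := (hS.isCompact_convexHull ℝ).inter_right
    (isClosed_eq (LinearMap.continuous_of_finiteDimensional l) continuous_const)
  refine subset_antisymm ?_ (convexHull_min (subset_inter (inter_subset_left.trans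
    (subset_convexHull ℝ S)) inter_subset_right) hBconv)
  have hext : B.extremePoints ℝ ⊆ S ∩ {x | l x = c} := by
    rw [(isExtreme_inter_eq_of_le (forall_mem_convexHull_le hle)).extremePoints_eq]
    exact fun x hx ↦ ⟨extremePoints_convexHull_subset hx.2, hx.1.2⟩
  calc B = closure (convexHull ℝ (B.extremePoints ℝ)) :=
        (closure_convexHull_extremePoints hBcomp hBconv).symm
    _ ⊆ closure (convexHull ℝ (S ∩ {x | l x = c})) := closure_mono (convexHull_mono hext)
    _ = convexHull ℝ (S ∩ {x | l x = c}) :=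
        ((hS.inter_of_left _).isClosed_convexHull ℝ).closure_eq

theorem Set.Finite.isPolytopeFace_of_isPolytopeFace_inter {S : Set E} (hS : S.Finite)
    {l : E →ₗ[ℝ] ℝ} {c : ℝ} (hle : ∀ s ∈ S, l s ≤ c)
    (hne : (convexHull ℝ S ∩ {x | l x = c}).Nonempty) {F : Set E}
    (hF : IsPolytopeFace (convexHull ℝ S ∩ {x | l x = c}) F) :
    IsPolytopeFace (convexHull ℝ S) F := by
  rcases hF with rfl | ⟨l₂, c₂, -, hle₂, rfl, hne₂⟩
  · exact isPolytopeFace_inter_eq_of_le (forall_mem_convexHull_le hle) hne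
  obtain ⟨N, hN⟩ := exists_add_mul_nonpos_and_eq_zero_iff hS (a := fun s ↦ l s - c)
    (b := fun s ↦ l₂ s - c₂) (fun s hs ↦ sub_nonpos.2 (hle s hs))
    (fun s hs hs' ↦ sub_nonpos.2 (hle₂ s ⟨subset_convexHull ℝ S hs, sub_eq_zero.1 hs'⟩))
  have hval : ∀ s, (l₂ + N • l) s - (c₂ + N * c) = (l₂ s - c₂) + N * (l s - c) := fun s ↦ by
    simp only [LinearMap.add_apply, LinearMap.smul_apply, smul_eq_mul]
    ring
  have hle₃ : ∀ s ∈ S, (l₂ + N • l) s ≤ c₂ + N * c :=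
    fun s hs ↦ sub_nonpos.1 ((hval s).symm ▸ (hN s hs).1)
  have hvert : S ∩ {x | (l₂ + N • l) x = c₂ + N * c} = S ∩ {x | l x = c} ∩ {x | l₂ x = c₂} := by
    ext s
    simp only [mem_inter_iff, mem_ofPred_eq, and_assoc, and_congr_right_iff]
    intro hs
    rw [← sub_eq_zero, hval, (hN s hs).2, sub_eq_zero, sub_eq_zero]
  have hface : convexHull ℝ S ∩ {x | (l₂ + N • l) x = c₂ + N * c} =
      convexHull ℝ S ∩ {x | l x = c} ∩ {x | l₂ x = c₂} := by
    rw [hS.convexHull_inter_eq_of_le hle₃, hvert, hS.convexHull_inter_eq_of_le hle,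
      (hS.inter_of_left _).convexHull_inter_eq_of_le fun s hs ↦
        hle₂ s ⟨subset_convexHull ℝ S hs.1, hs.2⟩]
  rw [← hface] at hne₂ ⊢
  exact isPolytopeFace_inter_eq_of_le (forall_mem_convexHull_le hle₃) hne₂

theorem Finset.exists_isPolytopeFace_mem_intrinsicInterior (S : Finset E) {x : E}
    (hx : x ∈ convexHull ℝ (S : Set E)) :
    ∃ F, IsPolytopeFace (convexHull ℝ (S : Set E)) F ∧ x ∈ intrinsicInterior ℝ F := by
  induction S using Finset.strongInduction generalizing x with
  | H S ih =>
  by_cases hrel : x ∈ intrinsicInterior ℝ (convexHull ℝ (S : Set E))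
  · exact ⟨_, .inl rfl, hrel⟩
  obtain ⟨l, hle, y, hy, hlt⟩ :=
    (convex_convexHull ℝ _).exists_le_of_notMem_intrinsicInterior hx hrel
  have hleS : ∀ s ∈ (S : Set E), l s ≤ l x := fun s hs ↦ hle s (subset_convexHull ℝ _ hs)
  have hface : convexHull ℝ (S : Set E) ∩ {z | l z = l x} =
      convexHull ℝ (S.filter fun s ↦ l s = l x : Finset E) := by
    rw [S.finite_toSet.convexHull_inter_eq_of_le hleS, Finset.coe_filter]
    rfl
  have hsub : S.filter (fun s ↦ l s = l x) ⊂ S := by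
    refine (Finset.filter_subset _ _).ssubset_of_ne fun hS ↦ hlt.ne ?_
    exact convexHull_min (fun s hs ↦ (Finset.filter_eq_self.1 hS s hs : l s = l x))
      (convex_hyperplane l.isLinear (l x)) hy
  obtain ⟨F, hF, hxF⟩ := ih _ hsub (x := x) (hface ▸ ⟨hx, rfl⟩)
  exact ⟨F, S.finite_toSet.isPolytopeFace_of_isPolytopeFace_inter hleS ⟨x, hx, rfl⟩
    (hface ▸ hF), hxF⟩

end Polytope

theorem segment_escapes_to_larger_face_general
    {E : Type*} [NormedAddCommGroup E] [NormedSpace ℝ E] [FiniteDimensional ℝ E]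
    (S : Finset E) (C : Set E) (hC : C = convexHull ℝ (S : Set E))
    (F : Set E) (hF : IsPolytopeFace C F)
    (γ : E) (hγ : γ ∈ intrinsicInterior ℝ F)
    (γ' : E) (hγ' : γ' ∈ C \ F) :
    ∃ lam : ℝ, lam ∈ Set.Ioc (0 : ℝ) 1 ∧
      ∃ F' : Set E, IsPolytopeFace C F' ∧
        finrank ℝ (affineSpan ℝ F).direction < finrank ℝ (affineSpan ℝ F').direction ∧
        lam • γ' + (1 - lam) • γ ∈ intrinsicInterior ℝ F' := by
  subst hC
  obtain ⟨hγ'C, hγ'F⟩ := hγ'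
  have hFC : F ⊆ convexHull ℝ (S : Set E) := hF.isExtreme.subset
  have hγF : γ ∈ F := intrinsicInterior_subset hγ
  have hseg : (1 / 2 : ℝ) • γ' + (1 - 1 / 2 : ℝ) • γ ∈ openSegment ℝ γ' γ :=
    ⟨1 / 2, 1 - 1 / 2, by norm_num, by norm_num, add_sub_cancel _ _, rfl⟩
  obtain ⟨F', hF', hmid⟩ := S.exists_isPolytopeFace_mem_intrinsicInterior
    ((convex_convexHull ℝ _).openSegment_subset hγ'C (hFC hγF) hseg)
  have hext := hF'.isExtreme
  have hmidF' := intrinsicInterior_subset hmid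
  have hγ'F' := hext.left_mem_of_mem_openSegment hγ'C (hFC hγF) hmidF' hseg
  have hγF' := hext.right_mem_of_mem_openSegment hγ'C (hFC hγF) hmidF' hseg
  have hFF' := hext.subset_of_mem_intrinsicInterior hFC hγ hγF'
  exact ⟨1 / 2, ⟨by norm_num, by norm_num⟩, F', hF',
    hF.finrank_direction_lt ⟨γ, hγF⟩ hFF' hext.subset fun h ↦ hγ'F (h hγ'F'), hmid⟩

/-- **Lemma 2.5.** Let `C` be the convex hull of a finite set in a finite-dimensional real
vector space and `F` a proper face of `C`.  If `γ` lies in the relative interior of `F`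
and `γ' ∈ C \ F`, then for some `λ ∈ (0,1]` the point `λ γ' + (1-λ) γ` lies in the
relative interior of a face of `C` of strictly larger dimension than `F`. -/
theorem segment_escapes_to_larger_face
    {E : Type*} [NormedAddCommGroup E] [NormedSpace ℝ E] [FiniteDimensional ℝ E]
    (S : Finset E) (C : Set E) (hC : C = convexHull ℝ (S : Set E))
    (F : Set E) (hF : IsPolytopeFace C F) (hFproper : F ≠ C)
    (γ : E) (hγ : γ ∈ intrinsicInterior ℝ F)
    (γ' : E) (hγ' : γ' ∈ C \ F) :
    ∃ lam : ℝ, lam ∈ Set.Ioc (0 : ℝ) 1 ∧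
      ∃ F' : Set E, IsPolytopeFace C F' ∧
        finrank ℝ (affineSpan ℝ F).direction < finrank ℝ (affineSpan ℝ F').direction ∧
        lam • γ' + (1 - lam) • γ ∈ intrinsicInterior ℝ F' :=
  segment_escapes_to_larger_face_general S C hC F hF γ hγ γ' hγ'
end

section
/- Let 𝔞 be a real vector space of finite dimension r equipped with a nonzero translation-invariant (Lebesgue) Borel measure da. Let χ_1, …, χ_n be linear forms on 𝔞 that span the dual space 𝔞* and satisfy χ_1 + ⋯ + χ_n = 0. Let Σ⁺ be a finite set of linear forms on 𝔞, 𝔞⁺ = {a ∈ 𝔞 : α(a) ≥ 0 for all α ∈ Σ⁺}, and Δ = {a ∈ 𝔞⁺ : χ_i(a) ≤ 1 for i = 1, …, n}, a compact set of finite Lebesgue measure 𝓛(Δ). Let γ be a linear form on 𝔞 and u = sup_{a ∈ Δ} γ(a). Then for every R > 0, every bounded measurable function f : ℝⁿ → ℂ vanishing outside {x : max_i |x_i| ≤ R}, and every T > 0 with TR ≥ 1, one has |∫_{𝔞⁺} f(e^{χ_1(a)}/T, …, e^{χ_n(a)}/T) e^{γ(a)} da| ≤ 𝓛(Δ) ·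 (sup |f|) · (RT)^u · (ln(RT))^r. -/
/-!
Put `L = log (RT) ≥ 0`. The integrand vanishes at every `a ∈ 𝔞⁺` with `χ_i(a) > L` for some `i`,
since then the `i`-th coordinate `e^{χ_i(a)}/T` exceeds `R`. So the integral lives on
`{a ∈ 𝔞⁺ | χ_i(a) ≤ L for all i}`, which is contained in `L • Δ`: for `L > 0` by homogeneity, and
for `L = 0` because forms that span `𝔞*` and sum to zero cannot all be `≤ 0` at a nonzero point.
On `L • Δ` one has `γ ≤ L u`, i.e. `e^γ ≤ (RT)^u`, and Haar measure scales as `L • Δ ↦ L^r 𝓛(Δ)`.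
-/

open MeasureTheory Pointwise

section OrderedField

variable {𝕜 V ι : Type*} [Field 𝕜] [LinearOrder 𝕜] [IsStrictOrderedRing 𝕜]
  [AddCommGroup V] [Module 𝕜 V] [Fintype ι] {χ : ι → V →ₗ[𝕜] 𝕜}

theorem eq_zero_of_forall_apply_nonpos (hspan : Submodule.span 𝕜 (Set.range χ) = ⊤)
    (hsum : ∑ i, χ i = 0) {a : V} (ha : ∀ i, χ i a ≤ 0) : a = 0 := by
  have hsum_a : ∑ i, χ i a = 0 := by simpa using congr($hsum a)
  have hzero : ∀ i, χ i a = 0 := fun i =>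
    (Finset.sum_eq_zero_iff_of_nonpos fun i _ => ha i).1 hsum_a i (Finset.mem_univ i)
  have hker : Submodule.span 𝕜 (Set.range χ) ≤ LinearMap.ker (Module.Dual.eval 𝕜 V a) :=
    Submodule.span_le.2 <| by rintro _ ⟨i, rfl⟩; exact hzero i
  rw [hspan, top_le_iff, LinearMap.ker_eq_top] at hker
  exact (Module.eval_apply_eq_zero_iff 𝕜 a).1 hker

theorem sep_forall_apply_le_subset_smul {K : Set V} (hK : ∀ c : 𝕜, 0 < c → ∀ a ∈ K, c • a ∈ K)
    (hspan : Submodule.span 𝕜 (Set.range χ) = ⊤) (hsum : ∑ i, χ i = 0) {t : 𝕜} (ht : 0 ≤ t) :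
    {a ∈ K | ∀ i, χ i a ≤ t} ⊆ t • {a ∈ K | ∀ i, χ i a ≤ 1} := by
  rintro a ⟨haK, hat⟩
  rcases ht.eq_or_lt with rfl | ht
  · obtain rfl := eq_zero_of_forall_apply_nonpos hspan hsum hat
    exact ⟨0, ⟨haK, by simp⟩, smul_zero _⟩
  · refine (Set.mem_smul_set_iff_inv_smul_mem₀ ht.ne' _ _).2
      ⟨hK _ (inv_pos.2 ht) a haK, fun i => ?_⟩
    rw [map_smul, smul_eq_mul, inv_mul_le_one₀ ht]
    exact hat i

theorem apply_le_mul_of_mem_smul {Δ : Set V} {γ : V →ₗ[𝕜] 𝕜} {u : 𝕜}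
    (hu : u ∈ upperBounds (γ '' Δ)) {t : 𝕜} (ht : 0 ≤ t) {a : V} (ha : a ∈ t • Δ) :
    γ a ≤ t * u := by
  obtain ⟨d, hd, rfl⟩ := ha
  rw [map_smul, smul_eq_mul]
  exact mul_le_mul_of_nonneg_left (hu ⟨d, hd, rfl⟩) ht

end OrderedField

theorem MeasureTheory.Measure.addHaar_real_smul_of_nonneg {E : Type*} [NormedAddCommGroup E]
    [NormedSpace ℝ E] [FiniteDimensional ℝ E] [MeasurableSpace E] [BorelSpace E]
    (μ : Measure E) [μ.IsAddHaarMeasure] {t : ℝ} (ht : 0 ≤ t) (s : Set E) :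
    μ.real (t • s) = t ^ Module.finrank ℝ E * μ.real s := by
  rw [Measure.real, Measure.addHaar_smul_of_nonneg μ ht, ENNReal.toReal_mul,
    ENNReal.toReal_ofReal (by positivity), Measure.real]

theorem MeasureTheory.norm_setIntegral_le_of_forall_sdiff_eq_zero {X F : Type*} [MeasurableSpace X]
    [NormedAddCommGroup F] [NormedSpace ℝ F] {μ : Measure X} {g : X → F} {s t : Set X} {C : ℝ}
    (ht : MeasurableSet t) (hst : s ⊆ t) (hs : μ s < ⊤) (hzero : ∀ x ∈ t \ s, g x = 0)
    (hC : ∀ x ∈ s, ‖g x‖ ≤ C) : ‖∫ x in t, g x ∂μ‖ ≤ C * μ.real s := by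
  rw [setIntegral_eq_of_subset_of_forall_sdiff_eq_zero ht hst hzero]
  exact norm_setIntegral_le_of_norm_le_const hs hC

theorem Real.lt_abs_exp_div_of_log_mul_lt {R T x : ℝ} (hR : 0 < R) (hT : 0 < T)
    (h : Real.log (R * T) < x) : R < |Real.exp x / T| := by
  rw [abs_of_pos (by positivity), lt_div_iff₀ hT]
  exact (Real.log_lt_iff_lt_exp (by positivity)).1 h

theorem isClosed_setOf_forall_mem_nonneg {E : Type*} [NormedAddCommGroup E] [NormedSpace ℝ E]
    [FiniteDimensional ℝ E] (S : Set (E →ₗ[ℝ] ℝ)) : IsClosed {a : E | ∀ α ∈ S, 0 ≤ α a} := by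
  simp only [Set.ofPred_forall]
  exact isClosed_biInter fun α _ => isClosed_le continuous_const α.continuous_of_finiteDimensional

/-- **Lemma 2.6.** Upper bound for a Laplace-type integral over the positive Weyl chamber:
`|∫_{𝔞⁺} f(e^{χ₁(a)}/T, …, e^{χₙ(a)}/T) e^{γ(a)} da| ≤ 𝓛(Δ)·sup|f|·(RT)^u·(ln RT)^r`. -/
theorem laplace_integral_upper_bound
    {𝔞 : Type*} [NormedAddCommGroup 𝔞] [NormedSpace ℝ 𝔞] [FiniteDimensional ℝ 𝔞]
    [MeasurableSpace 𝔞] [BorelSpace 𝔞]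
    (r : ℕ) (hr : Module.finrank ℝ 𝔞 = r)
    (da : Measure 𝔞) [da.IsAddHaarMeasure]
    {n : ℕ} (χ : Fin n → (𝔞 →ₗ[ℝ] ℝ))
    (hspan : Submodule.span ℝ (Set.range χ) = ⊤)
    (hsum : ∑ i, χ i = 0)
    (Sigpos : Finset (𝔞 →ₗ[ℝ] ℝ))
    (𝔞pos : Set 𝔞) (h𝔞pos : 𝔞pos = {a : 𝔞 | ∀ α ∈ Sigpos, 0 ≤ α a})
    (Δ : Set 𝔞) (hΔ : Δ = {a ∈ 𝔞pos | ∀ i, χ i a ≤ 1}) (hΔc : IsCompact Δ)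
    (γ : 𝔞 →ₗ[ℝ] ℝ) (u : ℝ) (hu : IsLUB ((fun a => γ a) '' Δ) u) :
    ∀ R > (0 : ℝ), ∀ f : (Fin n → ℝ) → ℂ, Measurable f → (∃ M, ∀ x, ‖f x‖ ≤ M) →
      (∀ x : Fin n → ℝ, (∃ i, R < |x i|) → f x = 0) →
      ∀ T > (0 : ℝ), 1 ≤ T * R →
      ‖∫ a in 𝔞pos, Real.exp (γ a) • f (fun i => Real.exp (χ i a) / T) ∂da‖
        ≤ (da Δ).toReal * (⨆ x, ‖f x‖) * (R * T) ^ u * Real.log (R * T) ^ r := by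
  intro R hR f _ ⟨M, hM⟩ hf0 T hT hTR
  have hRT : 0 < R * T := by positivity
  set L := Real.log (R * T)
  have hL : 0 ≤ L := Real.log_nonneg (by linarith)
  set E := {a ∈ 𝔞pos | ∀ i, χ i a ≤ L}
  have hcone : ∀ c : ℝ, 0 < c → ∀ a ∈ 𝔞pos, c • a ∈ 𝔞pos := by
    subst h𝔞pos
    exact fun c hc a ha α hα => by simpa using mul_nonneg hc.le (ha α hα)
  have hEΔ : E ⊆ L • Δ := hΔ ▸ sep_forall_apply_le_subset_smul hcone hspan hsum hL
  have hvanish : ∀ a ∈ 𝔞pos \ E, Real.exp (γ a) • f (fun i => Real.exp (χ i a) / T) = 0 := by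
    rintro a ⟨ha, haE⟩
    obtain ⟨i, hi⟩ : ∃ i, L < χ i a := by simpa [E, ha] using haE
    exact smul_eq_zero_of_right _ (hf0 _ ⟨i, Real.lt_abs_exp_div_of_log_mul_lt hR hT hi⟩)
  have hbound : ∀ a ∈ E,
      ‖Real.exp (γ a) • f (fun i => Real.exp (χ i a) / T)‖ ≤ (R * T) ^ u * ⨆ x, ‖f x‖ := by
    intro a ha
    rw [norm_smul, Real.norm_of_nonneg (Real.exp_pos _).le]
    gcongr
    · rw [Real.rpow_def_of_pos hRT]
      exact Real.exp_le_exp.2 (apply_le_mul_of_mem_smul hu.1 hL (hEΔ ha))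
    · exact le_ciSup ⟨M, by rintro _ ⟨x, rfl⟩; exact hM x⟩ _
  have hLΔ : da (L • Δ) < ⊤ := (hΔc.smul L).measure_lt_top
  have h𝔞pos_meas : MeasurableSet 𝔞pos :=
    h𝔞pos ▸ (isClosed_setOf_forall_mem_nonneg _).measurableSet
  calc ‖∫ a in 𝔞pos, Real.exp (γ a) • f (fun i => Real.exp (χ i a) / T) ∂da‖
      ≤ (R * T) ^ u * (⨆ x, ‖f x‖) * da.real E :=
        norm_setIntegral_le_of_forall_sdiff_eq_zero h𝔞pos_meas (Set.sep_subset _ _)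
          ((measure_mono hEΔ).trans_lt hLΔ) hvanish hbound
    _ ≤ (R * T) ^ u * (⨆ x, ‖f x‖) * da.real (L • Δ) := by
        have hsup : 0 ≤ ⨆ x, ‖f x‖ := Real.iSup_nonneg fun x => norm_nonneg (f x)
        gcongr
        exact hLΔ.ne
    _ = (da Δ).toReal * (⨆ x, ‖f x‖) * (R * T) ^ u * L ^ r := by
        rw [da.addHaar_real_smul_of_nonneg hL, hr, Measure.real]
        ring
end

section
/- Let W be a real vector space of finite dimension n, Q a positive definite quadratic form on W, and L a lattice in W (a discrete subgroup of W generated by a basis of W, equivalently a free ℤ-submodule of rank n spanning W). Then for every real number k with 2k > n, the family (1/Q(v)^k)_{v ∈ L \ {0}} is summable: ∑_{v ∈ L, v ≠ 0} Q(v)^{−k} < +∞. -/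
/-!
A positive definite quadratic form is the square of a Euclidean norm: `⟪x, y⟫ = Q.associated x y`
is an inner product with `‖v‖ ^ 2 = Q v`, so `Q v ^ (-k) = ‖v‖ ^ (-2k)`. A ℤ-basis of `L` with
`dim W` elements whose real span is `W` is an ℝ-basis of `W`, so `L` is a discrete lattice of
rank `n` for this norm, and `∑ ‖v‖ ^ r` over such a lattice converges for `r < -n`.
-/

open Module Submodule

namespace QuadraticMap.PosDef

variable {W : Type*} [AddCommGroup W] [Module ℝ W] {Q : QuadraticForm ℝ W}

noncomputable abbrev innerProductCore (hQ : Q.PosDef) : InnerProductSpace.Core ℝ W where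
  inner x y := Q.associated x y
  conj_inner_symm x y := QuadraticMap.associated_isSymm ℝ Q y x
  re_inner_nonneg x := by simpa [associated_eq_self_apply] using hQ.nonneg x
  add_left x y z := by simp
  smul_left x y r := by simp
  definite x hx := by
    by_contra h
    exact (hQ x h).ne' (by simpa [associated_eq_self_apply] using hx)

attribute [local instance] InnerProductSpace.Core.toNormedAddCommGroup in
noncomputable abbrev toInnerProductSpace (hQ : Q.PosDef) :
    @InnerProductSpace ℝ W _ hQ.innerProductCore.toNormedAddCommGroup.toSeminormedAddCommGroup :=
  InnerProductSpace.ofCore _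

end QuadraticMap.PosDef

namespace Submodule

variable {E : Type*} [NormedAddCommGroup E] [NormedSpace ℝ E] {ι : Type*} [Fintype ι]
  {L : Submodule ℤ E}

theorem exists_basis_eq_span_int_of_span_real_eq_top (b : Basis ι ℤ L)
    (hcard : Fintype.card ι = finrank ℝ E) (hspan : span ℝ (L : Set E) = ⊤) :
    ∃ bE : Basis ι ℝ E, L = span ℤ (Set.range bE) := by
  have hL : span ℤ (Set.range fun i => (b i : E)) = L := by
    rw [Set.range_comp' Subtype.val b, ← L.coe_subtype, ← map_span, b.span_eq, map_subtype_top]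
  have hle : ⊤ ≤ span ℝ (Set.range fun i => (b i : E)) := by
    rw [← span_span_of_tower ℤ, hL, hspan]
  exact ⟨basisOfTopLeSpanOfCardEqFinrank _ hle hcard, by
    rw [coe_basisOfTopLeSpanOfCardEqFinrank, hL]⟩

theorem summable_norm_rpow_of_span_real_eq_top (b : Basis ι ℤ L)
    (hcard : Fintype.card ι = finrank ℝ E) (hspan : span ℝ (L : Set E) = ⊤) {r : ℝ}
    (hr : r < -Fintype.card ι) : Summable fun v : L => ‖(v : E)‖ ^ r := by
  obtain ⟨bE, hL⟩ := L.exists_basis_eq_span_int_of_span_real_eq_top b hcard hspan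
  have : FiniteDimensional ℝ E := bE.finiteDimensional_of_finite
  have : DiscreteTopology L := hL ▸ inferInstance
  exact ZLattice.summable_norm_rpow L r (by rwa [finrank_eq_card_basis b])

end Submodule

/-- **Lemma 3.3.** If `Q` is a positive definite quadratic form on a real vector space `W`
of dimension `n` and `L` is a lattice in `W`, then `∑_{v ∈ L, v ≠ 0} Q(v)^{-k} < ∞`
whenever `2k > n`. -/
theorem summable_inv_rpow_of_posDef_quadraticForm
    {W : Type*} [AddCommGroup W] [Module ℝ W]
    (n : ℕ) (hn : Module.finrank ℝ W = n)
    (Q : QuadraticForm ℝ W) (hQ : Q.PosDef)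
    (L : Submodule ℤ W) (b : Module.Basis (Fin n) ℤ L)
    (hLspan : Submodule.span ℝ (L : Set W) = ⊤)
    (k : ℝ) (hk : (n : ℝ) < 2 * k) :
    Summable fun v : {x : L // x ≠ 0} => Q ((v : L) : W) ^ (-k) := by
  let := hQ.innerProductCore.toNormedAddCommGroup
  let := hQ.toInnerProductSpace
  have hnorm (x : W) : ‖x‖ ^ 2 = Q x := by
    rw [← real_inner_self_eq_norm_sq]
    exact QuadraticMap.associated_eq_self_apply ℝ Q x
  have hsum : Summable fun v : L => ‖(v : W)‖ ^ (-(2 * k)) :=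
    summable_norm_rpow_of_span_real_eq_top b (by rw [Fintype.card_fin, hn]) hLspan
      (by simpa using hk)
  refine (hsum.comp_injective Subtype.val_injective).congr fun v => ?_
  rw [Function.comp_apply, neg_mul_eq_mul_neg, Real.rpow_mul (norm_nonneg _), Real.rpow_two,
    hnorm]
end
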